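/- arXiv:2511.09321 — 2 statements merged into one kernel-verified Lean document; each statement's English description precedes it below -/
import Mathlib

section
/- Let μ_c, μ_d > 0 with μ_c·μ_d < 1, and let Δ ∈ ℝ. Consider the feasible set F = {(p_c, p_d) ∈ ℝ² : p_c ≥ 0, p_d ≥ 0, μ_c·p_c − p_d/μ_d = Δ}. If F is nonempty, then every minimizer (p_c*, p_d*) of the net grid draw (p_c, p_d) ↦ p_c − p_d over F satisfies p_c*·p_d* = 0, i.e. at the optimum the storage does not charge and discharge simultaneously. -/
/-- With round-trip efficiency `μ_c * μ_d < 1`, every minimizer of the net grid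
draw `p_c - p_d` over the feasible set
`F = {(p_c, p_d) | p_c ≥ 0, p_d ≥ 0, μ_c * p_c - p_d / μ_d = Δ}` satisfies
`p_c * p_d = 0`: at the optimum the storage does not charge and discharge
simultaneously. -/
theorem ess_no_simultaneous_charge_discharge (μc μd Δ : ℝ)
    (hμc : 0 < μc) (hμd : 0 < μd) (hrt : μc * μd < 1)
    (F : Set (ℝ × ℝ))
    (hF : F = {p : ℝ × ℝ | 0 ≤ p.1 ∧ 0 ≤ p.2 ∧ μc * p.1 - p.2 / μd = Δ})
    (hne : F.Nonempty)
    (pstar : ℝ × ℝ) (hmem : pstar ∈ F)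
    (hmin : ∀ q ∈ F, pstar.1 - pstar.2 ≤ q.1 - q.2) :
    pstar.1 * pstar.2 = 0 := by
  subst hF
  obtain ⟨h1, h2, h3⟩ := hmem
  by_contra h
  have hc : 0 < pstar.1 := lt_of_le_of_ne h1 (by intro heq; exact h (by rw [← heq]; ring))
  have hd : 0 < pstar.2 := lt_of_le_of_ne h2 (by intro heq; exact h (by rw [← heq]; ring))
  have hμ : 0 < μc * μd := mul_pos hμc hμd
  set t := min pstar.1 (pstar.2 / (μc * μd)) with ht
  have htpos : 0 < t := lt_min hc (div_pos hd hμ)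
  have ht1 : t ≤ pstar.1 := min_le_left _ _
  have ht2 : t * (μc * μd) ≤ pstar.2 := by
    have := min_le_right pstar.1 (pstar.2 / (μc * μd))
    calc t * (μc * μd) ≤ pstar.2 / (μc * μd) * (μc * μd) := by
          exact mul_le_mul_of_nonneg_right this hμ.le
      _ = pstar.2 := div_mul_cancel₀ _ hμ.ne'
  have hq : (pstar.1 - t, pstar.2 - t * (μc * μd)) ∈
      {p : ℝ × ℝ | 0 ≤ p.1 ∧ 0 ≤ p.2 ∧ μc * p.1 - p.2 / μd = Δ} := by
    refine ⟨by simpa using ht1, by simpa using ht2, ?_⟩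
    have heq : μc * (pstar.1 - t) - (pstar.2 - t * (μc * μd)) / μd
        = μc * pstar.1 - pstar.2 / μd := by
      field_simp
      ring
    simpa [heq] using h3
  have := hmin _ hq
  simp only at this
  nlinarith [htpos, hrt]
end

section
/- Let μ_c, μ_d > 0 with μ_c·μ_d < 1, and let p_c > 0 and p_d > 0 be simultaneous charging and discharging powers. Then there exist p_c' ≥ 0 and p_d' ≥ 0 with min(p_c', p_d') = 0, p_c' ≤ p_c, p_d' ≤ p_d, the same net battery energy change μ_c·p_c' − p_d'/μ_d = μ_c·p_c − p_d/μ_d, and strictly smaller net grid draw p_c' − p_d' < p_c − p_d. Explicitly, if μ_c·p_c ≥ p_d/μ_d one may take p_c' = p_c − p_d/(μ_c·μ_d) and p_d' = 0, and otherwise p_c' = 0 and p_d' = p_d − μ_c·μ_d·p_c. -/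
/-- Replacement construction: any simultaneous charging/discharging pair
`(p_c, p_d)` with `p_c, p_d > 0` can be replaced by a pair `(p_c', p_d')` with
`min p_c' p_d' = 0`, no larger components, the same net battery energy change,
and strictly smaller net grid draw; explicitly, if `μ_c * p_c ≥ p_d / μ_d` one
may take `p_c' = p_c - p_d / (μ_c * μ_d)` and `p_d' = 0`, and otherwise
`p_c' = 0` and `p_d' = p_d - μ_c * μ_d * p_c`. -/
theorem ess_replacement (μc μd pc pd : ℝ)
    (hμc : 0 < μc) (hμd : 0 < μd) (hrt : μc * μd < 1)
    (hpc : 0 < pc) (hpd : 0 < pd) :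
    ∃ pc' pd' : ℝ,
      0 ≤ pc' ∧ 0 ≤ pd' ∧ min pc' pd' = 0 ∧
      pc' ≤ pc ∧ pd' ≤ pd ∧
      μc * pc' - pd' / μd = μc * pc - pd / μd ∧
      pc' - pd' < pc - pd ∧
      ((μc * pc ≥ pd / μd → pc' = pc - pd / (μc * μd) ∧ pd' = 0) ∧
       (¬ (μc * pc ≥ pd / μd) → pc' = 0 ∧ pd' = pd - μc * μd * pc)) := by
  have hμcd : 0 < μc * μd := mul_pos hμc hμd
  have hkey : pd / μd * μd = pd := div_mul_cancel₀ pd hμd.ne'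
  have hkey2 : pd / (μc * μd) * (μc * μd) = pd := div_mul_cancel₀ pd hμcd.ne'
  by_cases h : μc * pc ≥ pd / μd
  · refine ⟨pc - pd / (μc * μd), 0, ?_, le_refl 0, ?_, ?_, hpd.le, ?_, ?_, fun _ => ⟨rfl, rfl⟩,
      fun hn => absurd h hn⟩
    · nlinarith
    · rw [min_eq_right]; nlinarith
    · nlinarith [div_nonneg hpd.le hμcd.le]
    · field_simp; ring
    · nlinarith
  · refine ⟨0, pd - μc * μd * pc, le_refl 0, ?_, ?_, hpc.le, ?_, ?_, ?_,
      fun hy => absurd hy h, fun _ => ⟨rfl, rfl⟩⟩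
    · push_neg at h; nlinarith
    · rw [min_eq_left]; push_neg at h; nlinarith
    · nlinarith
    · field_simp; ring
    · nlinarith
end
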